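/- Let R be a commutative ring, let q = Σ_{i+j+k=4} a_{ijk} x^i y^j z^k be a ternary quartic form over R and write H(q) = Σ_{i+j+k=4} h_{ijk} u^i v^j w^k (with the convention a_{ijk} = 0 whenever some index is negative). Then the following six identities hold, all sums taken over i,j,k ≥ 0 with i+j+k = 4: (1) Σ (i−j)(i!j!k!/2) a_{ijk} h_{ijk} = 0; (2) Σ (i+1)(i!j!k!/2) a_{(i+1)(j−1)k} h_{ijk} = 0; (3) Σ (i+1)(i!j!k!/2) a_{(i+1)j(k−1)} h_{ijk} = 0; (4) Σ (j−k)(i!j!k!/2) a_{ijk} h_{ijk} = 0; (5) Σ (j+1)(i!j!k!/2) a_{i(j+1)(k−1)} h_{ijk} = 0; (6) Σ (j+1)(i!j!k!/2) a_{(i−1)(j+1)k} h_{ijk} = 0. -/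

import Mathlib

open MvPolynomial

noncomputable section

/-- The classical invariant `S` of a binary quartic form with coefficients `f 0, …, f 4`. -/
def Sinv {R : Type*} [CommRing R] (f : Fin 5 → R) : R :=
  12 * f 0 * f 4 - 3 * f 1 * f 3 + f 2 ^ 2

/-- The classical invariant `T` of a binary quartic form with coefficients `f 0, …, f 4`. -/
def Tinv {R : Type*} [CommRing R] (f : Fin 5 → R) : R :=
  72 * f 0 * f 2 * f 4 - 27 * f 0 * f 3 ^ 2 - 27 * f 1 ^ 2 * f 4
    + 9 * f 1 * f 2 * f 3 - 2 * f 2 ^ 3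

/-- The binary quartic form `f₀ y⁴ + f₁ y³z + f₂ y²z² + f₃ yz³ + f₄ z⁴`. -/
def binQuartic {R : Type*} [CommRing R] (f : Fin 5 → R) : MvPolynomial (Fin 2) R :=
  ∑ i : Fin 5, C (f i) * X 0 ^ (4 - (i : ℕ)) * X 1 ^ (i : ℕ)

/-- The `i`-th coefficient of a binary quartic form: coefficient of `y^(4-i) z^i`. -/
def binCoeff {R : Type*} [CommRing R] (g : MvPolynomial (Fin 2) R) (i : Fin 5) : R :=
  coeff (Finsupp.single 0 (4 - (i : ℕ)) + Finsupp.single 1 (i : ℕ)) g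

/-- The substitution `g(y,z) = q(-v·y - w·z, u·y, u·z)`, a binary quartic form in `y, z` with
coefficients in `R[u,v,w]`. -/
def gsub {R : Type*} [CommRing R] (q : MvPolynomial (Fin 3) R) :
    MvPolynomial (Fin 2) (MvPolynomial (Fin 3) R) :=
  aeval
    (![(C (- X 1) * X 0 - C (X 2) * X 1 : MvPolynomial (Fin 2) (MvPolynomial (Fin 3) R)),
       C (X 0) * X 0, C (X 0) * X 1]) q

/-- `u⁴ · H(q)`, the invariant `S` of `g(y,z) = q(-vy-wz, uy, uz)`; the harmonic quartic `H(q)`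
is the form determined by `u⁴ · H(q) = SG q`. -/
def SG {R : Type*} [CommRing R] (q : MvPolynomial (Fin 3) R) : MvPolynomial (Fin 3) R :=
  Sinv (fun i => binCoeff (gsub q) i)

/-- `u⁶ · K(q)`, the invariant `T` of `g(y,z) = q(-vy-wz, uy, uz)`; the harmonic sextic `K(q)`
is the form determined by `u⁶ · K(q) = TG q`. -/
def TG {R : Type*} [CommRing R] (q : MvPolynomial (Fin 3) R) : MvPolynomial (Fin 3) R :=
  Tinv (fun i => binCoeff (gsub q) i)

/-- dot product of two vectors in `R³`. -/
def dot3 {R : Type*} [CommRing R] (d a : Fin 3 → R) : R :=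
  d 0 * a 0 + d 1 * a 1 + d 2 * a 2

/-- restriction of a ternary form to the parameterized line `(y,z) ↦ y·a + z·b`. -/
def restrictLine {R : Type*} [CommRing R] (q : MvPolynomial (Fin 3) R) (a b : Fin 3 → R) :
    MvPolynomial (Fin 2) R :=
  aeval (fun i => C (a i) * X 0 + C (b i) * X 1) q

/-- A binary quartic form vanishes identically or has a root of multiplicity at least `3`:
`f = L³·M` with `L ≠ 0` linear and `M` linear (possibly zero). -/
def HasTripleRoot {R : Type*} [CommRing R] (f : MvPolynomial (Fin 2) R) : Prop :=
  ∃ L M : MvPolynomial (Fin 2) R,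
    L.IsHomogeneous 1 ∧ M.IsHomogeneous 1 ∧ L ≠ 0 ∧ f = L ^ 3 * M

/-- The line with dual coordinates `d` is an inflection line of the quartic `{q = 0}`. -/
def IsInflectionLine {k : Type*} [Field k] (q : MvPolynomial (Fin 3) k) (d : Fin 3 → k) :
    Prop :=
  d ≠ 0 ∧ ∃ a b : Fin 3 → k, LinearIndependent k ![a, b] ∧
    dot3 d a = 0 ∧ dot3 d b = 0 ∧ HasTripleRoot (restrictLine q a b)

/-- The line with dual coordinates `d` is a simple inflection line of `{q = 0}` with
inflection point `p`. -/
def IsSimpleInflectionLineAt {k : Type*} [Field k] (q : MvPolynomial (Fin 3) k)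
    (d p : Fin 3 → k) : Prop :=
  d ≠ 0 ∧ ∃ (a b : Fin 3 → k) (s t : k), LinearIndependent k ![a, b] ∧
    dot3 d a = 0 ∧ dot3 d b = 0 ∧ (s, t) ≠ (0, 0) ∧
    (∀ i, p i = s * a i + t * b i) ∧
    eval p q = 0 ∧ (∃ i, eval p (pderiv i q) ≠ 0) ∧
    ∃ L M : MvPolynomial (Fin 2) k, L.IsHomogeneous 1 ∧ M.IsHomogeneous 1 ∧
      LinearIndependent k ![L, M] ∧
      restrictLine q a b = L ^ 3 * M ∧ eval ![s, t] L = 0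

/-- The line with dual coordinates `d` is a hyperinflection line of `{q = 0}` with
hyperinflection point `p`. -/
def IsHyperinflectionLineAt {k : Type*} [Field k] (q : MvPolynomial (Fin 3) k)
    (d p : Fin 3 → k) : Prop :=
  d ≠ 0 ∧ ∃ (a b : Fin 3 → k) (s t : k), LinearIndependent k ![a, b] ∧
    dot3 d a = 0 ∧ dot3 d b = 0 ∧ (s, t) ≠ (0, 0) ∧
    (∀ i, p i = s * a i + t * b i) ∧
    eval p q = 0 ∧ (∃ i, eval p (pderiv i q) ≠ 0) ∧
    ∃ (c : k) (L : MvPolynomial (Fin 2) k), c ≠ 0 ∧ L.IsHomogeneous 1 ∧ L ≠ 0 ∧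
      restrictLine q a b = C c * L ^ 4 ∧ eval ![s, t] L = 0

/-- The pairing `⟨·,·⟩` between quartic forms in `x,y,z` and quartic forms in `u,v,w`:
`⟨x^i y^j z^k, u^i v^j w^k⟩ = i!j!k!/2`. -/
def pairQ {R : Type*} [CommRing R] (q h : MvPolynomial (Fin 3) R) : R :=
  ∑ m ∈ q.support,
    (((m 0).factorial * (m 1).factorial * (m 2).factorial / 2 : ℕ) : R)
      * coeff m q * coeff m h

/-- The action of `Σ c_{ξη} ξ ∂_η ∈ 𝔤𝔩₃(R)` on polynomials. -/
def lieAct {R : Type*} [CommRing R] (c : Fin 3 → Fin 3 → R)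
    (q : MvPolynomial (Fin 3) R) : MvPolynomial (Fin 3) R :=
  ∑ ξ : Fin 3, ∑ η : Fin 3, C (c ξ η) * (X ξ * pderiv η q)

/-- substitution of variables by the linear change of coordinates `M`: `q(M·(x,y,z)ᵗ)`. -/
def substM {R : Type*} [CommRing R] (M : Matrix (Fin 3) (Fin 3) R)
    (q : MvPolynomial (Fin 3) R) : MvPolynomial (Fin 3) R :=
  aeval (fun i => ∑ j : Fin 3, C (M i j) * X j) q

/-- The quartic form `q_ε = (x−y)⁴ + (x−z)⁴ + (y−εz)⁴ − (x⁴ + y⁴ + z⁴)`. -/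
def qeps {k : Type*} [CommRing k] (ε : k) : MvPolynomial (Fin 3) k :=
  (X 0 - X 1) ^ 4 + (X 0 - X 2) ^ 4 + (X 1 - C ε * X 2) ^ 4
    - (X 0 ^ 4 + X 1 ^ 4 + X 2 ^ 4)

/-- The coefficient `a_{ijl}` of a ternary form, with integer indices and the convention that
it vanishes when some index is negative. -/
def tcoeff {R : Type*} [CommRing R] (g : MvPolynomial (Fin 3) R) (i j l : ℤ) : R :=
  if 0 ≤ i ∧ 0 ≤ j ∧ 0 ≤ l then
    coeff (Finsupp.single 0 i.toNat + Finsupp.single 1 j.toNat + Finsupp.single 2 l.toNat) g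
  else 0

/-- `i!·j!·l!/2`; an integer whenever `i+j+l = 4`. -/
def fac3 (i j l : ℕ) : ℕ := i.factorial * j.factorial * l.factorial / 2

/-!
Each of the six sums is the pairing `pairQ (E q) h` for one of the operators
`E = x∂ₓ - y∂_y, y∂ₓ, z∂ₓ, y∂_y - z∂_z, z∂_y, x∂_y`. Over an arbitrary commutative ring they are
checked by computation: a quartic form is determined by its fifteen coefficients `a i j k`,
expanding `g(y, z) = q(-vy - wz, uy, uz)` shows `S(g) = u⁴ · H` where the fifteen coefficients
`harmonicCoeff a` of `H` are quadratic in the `a i j k`, cancelling `u⁴` identifies `h` with `H`,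
and each identity becomes a polynomial identity of degree three in the `a i j k`.
-/

section HarmonicQuartic

variable {R : Type*} [CommRing R]

def ternaryForm (d : ℕ) (a : ℕ → ℕ → ℕ → R) : MvPolynomial (Fin 3) R :=
  ∑ m ∈ Finset.Nat.antidiagonalTuple 3 d,
    C (a (m 0) (m 1) (m 2)) * X 0 ^ m 0 * X 1 ^ m 1 * X 2 ^ m 2

lemma C_mul_X_pow_mul_X_pow_mul_X_pow_eq_monomial (c : R) (i j k : ℕ) :
    (C c * X 0 ^ i * X 1 ^ j * X 2 ^ k : MvPolynomial (Fin 3) R) =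
      monomial (Finsupp.single 0 i + Finsupp.single 1 j + Finsupp.single 2 k) c := by
  rw [monomial_add_single, monomial_add_single, C_mul_X_pow_eq_monomial]

lemma single_add_single_add_single_inj {i j k i' j' k' : ℕ} :
    (Finsupp.single (0 : Fin 3) i + Finsupp.single 1 j + Finsupp.single 2 k =
      Finsupp.single 0 i' + Finsupp.single 1 j' + Finsupp.single 2 k') ↔
      i = i' ∧ j = j' ∧ k = k' := by
  simp [Finsupp.ext_iff, Fin.forall_fin_succ]

lemma coeff_ternaryForm (d : ℕ) (a : ℕ → ℕ → ℕ → R) (i j k : ℕ) :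
    coeff (Finsupp.single 0 i + Finsupp.single 1 j + Finsupp.single 2 k) (ternaryForm d a) =
      if i + j + k = d then a i j k else 0 := by
  rw [ternaryForm, coeff_sum]
  simp_rw [C_mul_X_pow_mul_X_pow_mul_X_pow_eq_monomial, coeff_monomial]
  have hx (x : Fin 3 → ℕ) : (x 0 = i ∧ x 1 = j ∧ x 2 = k) ↔ ![i, j, k] = x := by
    simp [funext_iff, Fin.forall_fin_succ, eq_comm]
  simp_rw [single_add_single_add_single_inj, hx, Finset.sum_ite_eq,
    Finset.Nat.mem_antidiagonalTuple, Fin.sum_univ_three]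
  simp only [Matrix.cons_val_zero, Matrix.cons_val_one, Matrix.cons_val_two, Matrix.head_cons,
    Matrix.tail_cons]

lemma tcoeff_natCast (g : MvPolynomial (Fin 3) R) (i j k : ℕ) :
    tcoeff g i j k = coeff (Finsupp.single 0 i + Finsupp.single 1 j + Finsupp.single 2 k) g := by
  simp [tcoeff]

lemma tcoeff_eq_zero_of_neg (g : MvPolynomial (Fin 3) R) {i j k : ℤ}
    (h : i < 0 ∨ j < 0 ∨ k < 0) : tcoeff g i j k = 0 :=
  if_neg (by omega)

lemma tcoeff_ternaryForm (d : ℕ) (a : ℕ → ℕ → ℕ → R) (i j k : ℕ) :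
    tcoeff (ternaryForm d a) i j k = if i + j + k = d then a i j k else 0 := by
  rw [tcoeff_natCast, coeff_ternaryForm]

lemma MvPolynomial.IsHomogeneous.eq_ternaryForm {d : ℕ} {q : MvPolynomial (Fin 3) R}
    (hq : q.IsHomogeneous d) : q = ternaryForm d (fun i j k => tcoeff q i j k) := by
  ext n
  obtain ⟨i, j, k, rfl⟩ : ∃ i j k : ℕ,
      n = Finsupp.single 0 i + Finsupp.single 1 j + Finsupp.single 2 k :=
    ⟨n 0, n 1, n 2, by ext x; fin_cases x <;> simp⟩
  rw [coeff_ternaryForm, tcoeff_natCast]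
  split_ifs with hd
  · rfl
  · exact hq.coeff_eq_zero (by simpa using hd)

lemma sum_antidiagonalTuple_three_four {M : Type*} [AddCommMonoid M] (F : (Fin 3 → ℕ) → M) :
    ∑ m ∈ Finset.Nat.antidiagonalTuple 3 4, F m =
      F ![4, 0, 0] + F ![3, 1, 0] + F ![3, 0, 1] + F ![2, 2, 0] + F ![2, 1, 1] + F ![2, 0, 2] +
      F ![1, 3, 0] + F ![1, 2, 1] + F ![1, 1, 2] + F ![1, 0, 3] + F ![0, 4, 0] + F ![0, 3, 1] +
      F ![0, 2, 2] + F ![0, 1, 3] + F ![0, 0, 4] := by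
  rw [show Finset.Nat.antidiagonalTuple 3 4 =
    {![4, 0, 0], ![3, 1, 0], ![3, 0, 1], ![2, 2, 0], ![2, 1, 1], ![2, 0, 2], ![1, 3, 0],
      ![1, 2, 1], ![1, 1, 2], ![1, 0, 3], ![0, 4, 0], ![0, 3, 1], ![0, 2, 2], ![0, 1, 3],
      ![0, 0, 4]} by decide]
  simp [Finset.sum_insert, add_assoc]

lemma binCoeff_binQuartic (f : Fin 5 → R) (i : Fin 5) :
    binCoeff (binQuartic f) i = f i := by
  have hmon (c : R) (s t : ℕ) : (C c * X 0 ^ s * X 1 ^ t : MvPolynomial (Fin 2) R) =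
      monomial (Finsupp.single 0 s + Finsupp.single 1 t) c := by
    rw [monomial_add_single, C_mul_X_pow_eq_monomial]
  simp only [binCoeff, binQuartic, coeff_sum, hmon, coeff_monomial]
  rw [Fintype.sum_eq_single i fun j hj => if_neg fun h => hj ?_, if_pos rfl]
  have := DFunLike.congr_fun h 1
  simp at this
  exact Fin.ext this

lemma binQuartic_eq (f : Fin 5 → R) :
    binQuartic f = C (f 0) * X 0 ^ 4 + C (f 1) * X 0 ^ 3 * X 1 + C (f 2) * X 0 ^ 2 * X 1 ^ 2
      + C (f 3) * X 0 * X 1 ^ 3 + C (f 4) * X 1 ^ 4 := by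
  simp [binQuartic, Fin.sum_univ_five]

def harmonicCoeff (a : ℕ → ℕ → ℕ → R) : ℕ → ℕ → ℕ → R
  | 4, 0, 0 => 12 * a 0 0 4 * a 0 4 0 - 3 * a 0 1 3 * a 0 3 1 + a 0 2 2 ^ 2
  | 3, 1, 0 => -12 * a 0 0 4 * a 1 3 0 + 3 * a 0 1 3 * a 1 2 1 + 3 * a 0 3 1 * a 1 0 3
      - 2 * a 0 2 2 * a 1 1 2
  | 3, 0, 1 => -12 * a 0 4 0 * a 1 0 3 + 3 * a 0 1 3 * a 1 3 0 + 3 * a 0 3 1 * a 1 1 2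
      - 2 * a 0 2 2 * a 1 2 1
  | 2, 2, 0 => 12 * a 0 0 4 * a 2 2 0 - 3 * a 0 1 3 * a 2 1 1 - 3 * a 1 0 3 * a 1 2 1
      + 2 * a 0 2 2 * a 2 0 2 + a 1 1 2 ^ 2
  | 2, 1, 1 => 9 * a 1 0 3 * a 1 3 0 - 6 * a 0 1 3 * a 2 2 0 - a 1 1 2 * a 1 2 1
      - 6 * a 0 3 1 * a 2 0 2 + 4 * a 0 2 2 * a 2 1 1
  | 2, 0, 2 => 12 * a 0 4 0 * a 2 0 2 - 3 * a 1 1 2 * a 1 3 0 - 3 * a 0 3 1 * a 2 1 1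
      + 2 * a 0 2 2 * a 2 2 0 + a 1 2 1 ^ 2
  | 1, 3, 0 => -12 * a 0 0 4 * a 3 1 0 + 3 * a 0 1 3 * a 3 0 1 + 3 * a 1 0 3 * a 2 1 1
      - 2 * a 1 1 2 * a 2 0 2
  | 1, 2, 1 => -6 * a 1 0 3 * a 2 2 0 + 9 * a 0 1 3 * a 3 1 0 - a 1 1 2 * a 2 1 1
      + 4 * a 1 2 1 * a 2 0 2 - 6 * a 0 2 2 * a 3 0 1
  | 1, 1, 2 => -6 * a 1 3 0 * a 2 0 2 + 4 * a 1 1 2 * a 2 2 0 - a 1 2 1 * a 2 1 1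
      + 9 * a 0 3 1 * a 3 0 1 - 6 * a 0 2 2 * a 3 1 0
  | 1, 0, 3 => -12 * a 0 4 0 * a 3 0 1 + 3 * a 1 3 0 * a 2 1 1 + 3 * a 0 3 1 * a 3 1 0
      - 2 * a 1 2 1 * a 2 2 0
  | 0, 4, 0 => 12 * a 0 0 4 * a 4 0 0 - 3 * a 1 0 3 * a 3 0 1 + a 2 0 2 ^ 2
  | 0, 3, 1 => 3 * a 1 0 3 * a 3 1 0 - 12 * a 0 1 3 * a 4 0 0 + 3 * a 1 1 2 * a 3 0 1
      - 2 * a 2 0 2 * a 2 1 1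
  | 0, 2, 2 => 2 * a 2 0 2 * a 2 2 0 - 3 * a 1 1 2 * a 3 1 0 + a 2 1 1 ^ 2
      - 3 * a 1 2 1 * a 3 0 1 + 12 * a 0 2 2 * a 4 0 0
  | 0, 1, 3 => 3 * a 1 3 0 * a 3 0 1 - 2 * a 2 1 1 * a 2 2 0 + 3 * a 1 2 1 * a 3 1 0
      - 12 * a 0 3 1 * a 4 0 0
  | 0, 0, 4 => 12 * a 0 4 0 * a 4 0 0 - 3 * a 1 3 0 * a 3 1 0 + a 2 2 0 ^ 2
  | _, _, _ => 0

lemma gsub_ternaryForm (a : ℕ → ℕ → ℕ → R) :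
    gsub (ternaryForm 4 a) = binQuartic
      ![C (a 4 0 0) * X 1 ^ 4 - C (a 3 1 0) * X 0 * X 1 ^ 3 + C (a 2 2 0) * X 0 ^ 2 * X 1 ^ 2
          - C (a 1 3 0) * X 0 ^ 3 * X 1 + C (a 0 4 0) * X 0 ^ 4,
        4 * C (a 4 0 0) * X 1 ^ 3 * X 2 - 3 * C (a 3 1 0) * X 0 * X 1 ^ 2 * X 2
          - C (a 3 0 1) * X 0 * X 1 ^ 3 + 2 * C (a 2 2 0) * X 0 ^ 2 * X 1 * X 2
          + C (a 2 1 1) * X 0 ^ 2 * X 1 ^ 2 - C (a 1 3 0) * X 0 ^ 3 * X 2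
          - C (a 1 2 1) * X 0 ^ 3 * X 1 + C (a 0 3 1) * X 0 ^ 4,
        6 * C (a 4 0 0) * X 1 ^ 2 * X 2 ^ 2 - 3 * C (a 3 1 0) * X 0 * X 1 * X 2 ^ 2
          - 3 * C (a 3 0 1) * X 0 * X 1 ^ 2 * X 2 + C (a 2 2 0) * X 0 ^ 2 * X 2 ^ 2
          + 2 * C (a 2 1 1) * X 0 ^ 2 * X 1 * X 2 + C (a 2 0 2) * X 0 ^ 2 * X 1 ^ 2
          - C (a 1 2 1) * X 0 ^ 3 * X 2 - C (a 1 1 2) * X 0 ^ 3 * X 1 + C (a 0 2 2) * X 0 ^ 4,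
        4 * C (a 4 0 0) * X 1 * X 2 ^ 3 - C (a 3 1 0) * X 0 * X 2 ^ 3
          - 3 * C (a 3 0 1) * X 0 * X 1 * X 2 ^ 2 + C (a 2 1 1) * X 0 ^ 2 * X 2 ^ 2
          + 2 * C (a 2 0 2) * X 0 ^ 2 * X 1 * X 2 - C (a 1 1 2) * X 0 ^ 3 * X 2
          - C (a 1 0 3) * X 0 ^ 3 * X 1 + C (a 0 1 3) * X 0 ^ 4,
        C (a 4 0 0) * X 2 ^ 4 - C (a 3 0 1) * X 0 * X 2 ^ 3 + C (a 2 0 2) * X 0 ^ 2 * X 2 ^ 2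
          - C (a 1 0 3) * X 0 ^ 3 * X 2 + C (a 0 0 4) * X 0 ^ 4] := by
  simp only [gsub, ternaryForm, binQuartic_eq, sum_antidiagonalTuple_three_four,
    map_add, map_sub, map_mul, map_pow, map_neg, map_ofNat, aeval_X, aeval_C,
    MvPolynomial.algebraMap_apply, algebraMap_eq, Matrix.cons_val_zero, Matrix.cons_val_one,
    Matrix.cons_val_two, Matrix.cons_val_three, Matrix.cons_val_four, Matrix.head_cons,
    Matrix.tail_cons]
  ring

lemma SG_ternaryForm (a : ℕ → ℕ → ℕ → R) :
    SG (ternaryForm 4 a) = X 0 ^ 4 * ternaryForm 4 (harmonicCoeff a) := by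
  rw [SG, gsub_ternaryForm]
  simp only [binCoeff_binQuartic, Sinv, ternaryForm, sum_antidiagonalTuple_three_four,
    harmonicCoeff, map_add, map_sub, map_mul, map_pow, map_neg, map_ofNat,
    Matrix.cons_val_zero, Matrix.cons_val_one, Matrix.cons_val_two,
    Matrix.cons_val_three, Matrix.cons_val_four, Matrix.head_cons, Matrix.tail_cons]
  ring

end HarmonicQuartic

/-- The six identities among the coefficients `a_{ijk}` of a ternary quartic
form `q` and the coefficients `h_{ijk}` of its harmonic quartic `h` (`u⁴·h = SG q`), all sums
over `i,j,k ≥ 0` with `i+j+k = 4`. -/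
theorem stmt4 {R : Type*} [CommRing R]
    (q : MvPolynomial (Fin 3) R) (hq : q.IsHomogeneous 4)
    (h : MvPolynomial (Fin 3) R) (hh : X 0 ^ 4 * h = SG q) :
    (∑ m ∈ Finset.Nat.antidiagonalTuple 3 4,
        (((m 0 : ℤ) - (m 1 : ℤ) : ℤ) : R) * (fac3 (m 0) (m 1) (m 2) : R)
          * tcoeff q (m 0) (m 1) (m 2) * tcoeff h (m 0) (m 1) (m 2) = 0) ∧
    (∑ m ∈ Finset.Nat.antidiagonalTuple 3 4,
        ((m 0 + 1 : ℕ) : R) * (fac3 (m 0) (m 1) (m 2) : R)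
          * tcoeff q ((m 0 : ℤ) + 1) ((m 1 : ℤ) - 1) (m 2)
          * tcoeff h (m 0) (m 1) (m 2) = 0) ∧
    (∑ m ∈ Finset.Nat.antidiagonalTuple 3 4,
        ((m 0 + 1 : ℕ) : R) * (fac3 (m 0) (m 1) (m 2) : R)
          * tcoeff q ((m 0 : ℤ) + 1) (m 1) ((m 2 : ℤ) - 1)
          * tcoeff h (m 0) (m 1) (m 2) = 0) ∧
    (∑ m ∈ Finset.Nat.antidiagonalTuple 3 4,
        (((m 1 : ℤ) - (m 2 : ℤ) : ℤ) : R) * (fac3 (m 0) (m 1) (m 2) : R)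
          * tcoeff q (m 0) (m 1) (m 2) * tcoeff h (m 0) (m 1) (m 2) = 0) ∧
    (∑ m ∈ Finset.Nat.antidiagonalTuple 3 4,
        ((m 1 + 1 : ℕ) : R) * (fac3 (m 0) (m 1) (m 2) : R)
          * tcoeff q (m 0) ((m 1 : ℤ) + 1) ((m 2 : ℤ) - 1)
          * tcoeff h (m 0) (m 1) (m 2) = 0) ∧
    (∑ m ∈ Finset.Nat.antidiagonalTuple 3 4,
        ((m 1 + 1 : ℕ) : R) * (fac3 (m 0) (m 1) (m 2) : R)
          * tcoeff q ((m 0 : ℤ) - 1) ((m 1 : ℤ) + 1) (m 2)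
          * tcoeff h (m 0) (m 1) (m 2) = 0) := by
  rw [hq.eq_ternaryForm, SG_ternaryForm] at hh
  obtain rfl := (isRegular_X_pow 4).left hh
  refine ⟨?_, ?_, ?_, ?_, ?_, ?_⟩ <;>
  · simp only [sum_antidiagonalTuple_three_four, Matrix.cons_val_zero, Matrix.cons_val_one,
      Matrix.cons_val_two, Matrix.head_cons, Matrix.tail_cons, tcoeff_ternaryForm]
    norm_num [harmonicCoeff, fac3, Nat.factorial, tcoeff_eq_zero_of_neg]
    ring
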